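/- Let G be a perfect finite simple graph of order n ≥ 1, let p, q ≥ 1, and write I(G∘(K_p ∪ K_q); x) = Σ_{i=0}^{2n} s_i x^i. Let ω = max{ω(G), p, q}. Then s_{⌈(2nω−1)/(ω+1)⌉} ≥ s_{⌈(2nω−1)/(ω+1)⌉+1} ≥ ... ≥ s_{2n−1} ≥ s_{2n}, and s_0 ≤ s_1 ≤ ... ≤ s_{t−1} ≤ s_t, where t = 2n − ⌈(2nω−1)/(ω+1)⌉. -/

import Mathlib

open Polynomial Finset
open scoped Classical

/-- A set of vertices is independent if its elements are pairwise non-adjacent. -/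
def IsIndepSet {V : Type*} (G : SimpleGraph V) (s : Finset V) : Prop :=
  ∀ u ∈ s, ∀ v ∈ s, u ≠ v → ¬ G.Adj u v

/-- The independence number: maximum cardinality of an independent set. -/
noncomputable def indepNum {V : Type*} [Fintype V] (G : SimpleGraph V) : ℕ :=
  (Finset.univ.filter (fun s : Finset V => IsIndepSet G s)).sup Finset.card

/-- The number of independent sets of cardinality `k`. -/
noncomputable def indepCount {V : Type*} [Fintype V] (G : SimpleGraph V) (k : ℕ) : ℕ :=
  (Finset.univ.filter (fun s : Finset V => IsIndepSet G s ∧ s.card = k)).card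

/-- The independence polynomial `I(G;x) = ∑ s_k x^k`. -/
noncomputable def indepPoly {V : Type*} [Fintype V] (G : SimpleGraph V) : Polynomial ℝ :=
  ∑ k ∈ Finset.range (indepNum G + 1), Polynomial.C (indepCount G k : ℝ) * Polynomial.X ^ k

/-- The corona `G ∘ H`: take `G` together with `|V(G)|` disjoint copies of `H`,
joining each vertex `v` of `G` to all vertices of the `v`-th copy of `H`. -/
def corona {V W : Type*} (G : SimpleGraph V) (H : SimpleGraph W) :
    SimpleGraph (V ⊕ V × W) where
  Adj x y :=
    match x, y with
    | Sum.inl u, Sum.inl v => G.Adj u v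
    | Sum.inl u, Sum.inr (v, _) => u = v
    | Sum.inr (v, _), Sum.inl u => u = v
    | Sum.inr (v, w), Sum.inr (v', w') => v = v' ∧ H.Adj w w'
  symm.symm := by
    rintro (u | ⟨v, w⟩) (u' | ⟨v', w'⟩) h
    · exact G.adj_symm h
    · exact h
    · exact h
    · exact ⟨h.1.symm, H.adj_symm h.2⟩
  loopless.irrefl := by
    rintro (u | ⟨v, w⟩) h
    · exact G.loopless.irrefl u h
    · exact H.loopless.irrefl w h.2

/-- The disjoint union of two graphs. -/
def disjUnion {V W : Type*} (G : SimpleGraph V) (H : SimpleGraph W) :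
    SimpleGraph (V ⊕ W) where
  Adj x y :=
    match x, y with
    | Sum.inl a, Sum.inl b => G.Adj a b
    | Sum.inr a, Sum.inr b => H.Adj a b
    | _, _ => False
  symm.symm := by
    rintro (a | a) (b | b) h
    · exact G.adj_symm h
    · exact h.elim
    · exact h.elim
    · exact H.adj_symm h
  loopless.irrefl := by
    rintro (a | a) h
    · exact G.loopless.irrefl a h
    · exact H.loopless.irrefl a h

/-- The Zykov sum (join) of two graphs. -/
def zykovSum {V W : Type*} (G : SimpleGraph V) (H : SimpleGraph W) :
    SimpleGraph (V ⊕ W) where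
  Adj x y :=
    match x, y with
    | Sum.inl a, Sum.inl b => G.Adj a b
    | Sum.inr a, Sum.inr b => H.Adj a b
    | _, _ => True
  symm.symm := by
    rintro (a | a) (b | b) h
    · exact G.adj_symm h
    · trivial
    · trivial
    · exact H.adj_symm h
  loopless.irrefl := by
    rintro (a | a) h
    · exact G.loopless.irrefl a h
    · exact H.loopless.irrefl a h

/-- `K_p - e`: the complete graph on `Fin p` minus the edge joining vertices `0` and `1`. -/
def completeMinusEdge (p : ℕ) : SimpleGraph (Fin p) where
  Adj a b := a ≠ b ∧ ¬(a.val ≤ 1 ∧ b.val ≤ 1)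
  symm.symm := fun a b ⟨h1, h2⟩ => ⟨h1.symm, fun ⟨hb, ha⟩ => h2 ⟨ha, hb⟩⟩
  loopless.irrefl := fun a ⟨h, _⟩ => h rfl

/-- The clique number of a graph. -/
noncomputable def cliqueNum {V : Type*} [Fintype V] (G : SimpleGraph V) : ℕ :=
  (Finset.univ.filter (fun s : Finset V => G.IsClique ↑s)).sup Finset.card

/-- A graph is perfect if every induced subgraph has chromatic number
equal to its clique number. -/
def IsPerfect {V : Type*} [Fintype V] (G : SimpleGraph V) : Prop :=
  ∀ s : Set V, (G.induce s).chromaticNumber = (cliqueNum (G.induce s) : ℕ∞)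

/-- The coefficient sequence `(a_0, …, a_n)` of a polynomial (indexed up to its
degree `n`) is symmetric, i.e. `a_i = a_{n-i}`. -/
def CoeffSymmetric (P : Polynomial ℝ) : Prop :=
  ∀ i ≤ P.natDegree, P.coeff i = P.coeff (P.natDegree - i)

/-- The coefficient sequence of a polynomial is unimodal with mode `k`. -/
def IsMode (P : Polynomial ℝ) (k : ℕ) : Prop :=
  k ≤ P.natDegree ∧ (∀ i, i < k → P.coeff i ≤ P.coeff (i + 1)) ∧
    (∀ i, k ≤ i → i < P.natDegree → P.coeff (i + 1) ≤ P.coeff i)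

/-- The coefficient sequence of a polynomial is unimodal. -/
def CoeffUnimodal (P : Polynomial ℝ) : Prop :=
  ∃ k, IsMode P k

/-- `k` is the unique index achieving the maximal coefficient of `P`. -/
def IsUniqueMode (P : Polynomial ℝ) (k : ℕ) : Prop :=
  k ≤ P.natDegree ∧ ∀ j ≤ P.natDegree, j ≠ k → P.coeff j < P.coeff k

/-- The polynomial has a unique mode. -/
def HasUniqueMode (P : Polynomial ℝ) : Prop :=
  ∃ k, IsUniqueMode P k

/-!
An independent set of `G ∘ H` is an independent set `S` of `G` together with, for every vertex
of `G` outside `S`, an independent set of the copy of `H` attached to it; hence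
`I(G ∘ H) = ∑_S x^|S| I(H)^(n - |S|)`. For `H = K_p ∪ K_q` we have `I(H) = (1 + p x)(1 + q x)`,
so `I(H)^m` is a product `f` of `N = 2m` factors `1 + a_i x` with `1 ≤ a_i ≤ ω`. Writing
`f_i = f / (1 + a_i x)`, the identities `x f' = ∑ a_i x f_i` and `N f = x f' + ∑ f_i` give
`(r + 1) [x^(r+1)] f = ∑ a_i [x^r] f_i` and `(N - r) [x^r] f = ∑ [x^r] f_i`, so the coefficients
of `f` increase while `2r < N` and decrease once `ω (N - r) ≤ r + 1`. Shifting by `x^|S|` and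
summing over `S` turns these into the two monotone stretches of `I(G ∘ (K_p ∪ K_q))`.
-/

section LinearFactors

variable {ι : Type*} [Fintype ι] (a : ι → ℕ)

theorem card_smul_prod_one_add_mul_X :
    Fintype.card ι • ∏ i, (1 + C (a i) * X) =
      X * derivative (∏ i, (1 + C (a i) * X)) + ∑ i, ∏ j ∈ univ.erase i, (1 + C (a j) * X) := by
  rw [derivative_prod_finset, Finset.mul_sum, ← Finset.card_univ, ← Finset.sum_const,
    ← Finset.sum_add_distrib]
  refine Finset.sum_congr rfl fun i _ => ?_
  rw [← Finset.mul_prod_erase _ _ (Finset.mem_univ i)]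
  simp only [derivative_add, derivative_one, derivative_mul, derivative_C, derivative_X]
  ring

theorem succ_mul_coeff_succ_prod_one_add_mul_X (r : ℕ) :
    (r + 1) * (∏ i, (1 + C (a i) * X)).coeff (r + 1) =
      ∑ i, a i * (∏ j ∈ univ.erase i, (1 + C (a j) * X)).coeff r := by
  have h := coeff_derivative (∏ i, (1 + C (a i) * X)) r
  rw [Nat.cast_id, mul_comm] at h
  rw [← h, derivative_prod_finset, finsetSum_coeff]
  refine Finset.sum_congr rfl fun i _ => ?_
  simp [mul_comm]

theorem card_sub_mul_coeff_prod_one_add_mul_X (r : ℕ) :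
    (Fintype.card ι - r) * (∏ i, (1 + C (a i) * X)).coeff r =
      ∑ i, (∏ j ∈ univ.erase i, (1 + C (a j) * X)).coeff r := by
  have h := congrArg (coeff · r) (card_smul_prod_one_add_mul_X a)
  simp only [coeff_smul, smul_eq_mul, coeff_add, finsetSum_coeff] at h
  rcases r with _ | r
  · simpa using h
  · rw [coeff_X_mul, coeff_derivative, Nat.cast_id] at h
    rw [Nat.sub_mul, h, mul_comm, Nat.add_sub_cancel_left]

theorem coeff_prod_one_add_mul_X_le_coeff_succ {r : ℕ} (ha : ∀ i, 1 ≤ a i)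
    (hr : 2 * r + 1 ≤ Fintype.card ι) :
    (∏ i, (1 + C (a i) * X)).coeff r ≤ (∏ i, (1 + C (a i) * X)).coeff (r + 1) := by
  refine Nat.le_of_mul_le_mul_left (c := r + 1) ?_ r.succ_pos
  calc (r + 1) * (∏ i, (1 + C (a i) * X)).coeff r
      ≤ (Fintype.card ι - r) * (∏ i, (1 + C (a i) * X)).coeff r := by gcongr; omega
    _ = ∑ i, (∏ j ∈ univ.erase i, (1 + C (a j) * X)).coeff r :=
      card_sub_mul_coeff_prod_one_add_mul_X a r
    _ ≤ ∑ i, a i * (∏ j ∈ univ.erase i, (1 + C (a j) * X)).coeff r := by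
      gcongr with i
      exact Nat.le_mul_of_pos_left _ (ha i)
    _ = (r + 1) * (∏ i, (1 + C (a i) * X)).coeff (r + 1) :=
      (succ_mul_coeff_succ_prod_one_add_mul_X a r).symm

theorem coeff_succ_prod_one_add_mul_X_le_coeff {r ω : ℕ} (ha : ∀ i, a i ≤ ω)
    (hr : ω * (Fintype.card ι - r) ≤ r + 1) :
    (∏ i, (1 + C (a i) * X)).coeff (r + 1) ≤ (∏ i, (1 + C (a i) * X)).coeff r := by
  refine Nat.le_of_mul_le_mul_left (c := r + 1) ?_ r.succ_pos
  calc (r + 1) * (∏ i, (1 + C (a i) * X)).coeff (r + 1)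
      = ∑ i, a i * (∏ j ∈ univ.erase i, (1 + C (a j) * X)).coeff r :=
      succ_mul_coeff_succ_prod_one_add_mul_X a r
    _ ≤ ∑ i, ω * (∏ j ∈ univ.erase i, (1 + C (a j) * X)).coeff r :=
      Finset.sum_le_sum fun i _ => Nat.mul_le_mul_right _ (ha i)
    _ = ω * ((Fintype.card ι - r) * (∏ i, (1 + C (a i) * X)).coeff r) := by
      rw [card_sub_mul_coeff_prod_one_add_mul_X, Finset.mul_sum]
    _ ≤ (r + 1) * (∏ i, (1 + C (a i) * X)).coeff r := by
      rw [← mul_assoc]; gcongr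

end LinearFactors

section TwoFactors

variable (p q : ℕ)

theorem one_add_mul_X_mul_one_add_mul_X_pow_eq_prod (M : ℕ) :
    ((1 + C p * X) * (1 + C q * X)) ^ M =
      ∏ i : Fin M ⊕ Fin M, (1 + C (Sum.elim (fun _ => p) (fun _ => q) i) * X) := by
  simp [mul_pow]

variable {p q}

theorem coeff_one_add_mul_X_mul_one_add_mul_X_pow_le_coeff_succ {M r : ℕ} (hp : 1 ≤ p)
    (hq : 1 ≤ q) (hr : r < M) :
    (((1 + C p * X) * (1 + C q * X)) ^ M).coeff r ≤
      (((1 + C p * X) * (1 + C q * X)) ^ M).coeff (r + 1) := by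
  rw [one_add_mul_X_mul_one_add_mul_X_pow_eq_prod]
  refine coeff_prod_one_add_mul_X_le_coeff_succ _ (fun i => ?_) (by simp; omega)
  cases i <;> assumption

theorem coeff_succ_one_add_mul_X_mul_one_add_mul_X_pow_le_coeff {M r ω : ℕ} (hp : p ≤ ω)
    (hq : q ≤ ω) (hr : ω * (2 * M - r) ≤ r + 1) :
    (((1 + C p * X) * (1 + C q * X)) ^ M).coeff (r + 1) ≤
      (((1 + C p * X) * (1 + C q * X)) ^ M).coeff r := by
  rw [one_add_mul_X_mul_one_add_mul_X_pow_eq_prod]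
  refine coeff_succ_prod_one_add_mul_X_le_coeff _ (fun i => ?_) (by simpa [two_mul] using hr)
  cases i <;> assumption

end TwoFactors

section IndepSetPoly

variable {V W : Type*}

theorem isIndepSet_disjUnion_disjSum_iff {G : SimpleGraph V} {H : SimpleGraph W} {s : Finset V}
    {t : Finset W} :
    IsIndepSet (disjUnion G H) (s.disjSum t) ↔ IsIndepSet G s ∧ IsIndepSet H t := by
  refine ⟨fun h => ⟨fun u hu v hv huv => ?_, fun u hu v hv huv => ?_⟩, ?_⟩
  · exact h (.inl u) (by simpa) (.inl v) (by simpa) (by simpa)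
  · exact h (.inr u) (by simpa) (.inr v) (by simpa) (by simpa)
  · rintro ⟨hs, ht⟩ (u | u) hu (v | v) hv huv
    · exact hs u (by simpa using hu) v (by simpa using hv) (by simpa using huv)
    · exact id
    · exact id
    · exact ht u (by simpa using hu) v (by simpa using hv) (by simpa using huv)

variable [Fintype V] [Fintype W]

noncomputable def indepSetPoly (G : SimpleGraph V) : ℕ[X] :=
  ∑ s with IsIndepSet G s, X ^ #s

theorem coeff_indepSetPoly (G : SimpleGraph V) (k : ℕ) :
    (indepSetPoly G).coeff k = indepCount G k := by
  simp [indepSetPoly, indepCount, finsetSum_coeff, coeff_X_pow, sum_boole, filter_filter, eq_comm]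

theorem indepSetPoly_disjUnion (G : SimpleGraph V) (H : SimpleGraph W) :
    indepSetPoly (disjUnion G H) = indepSetPoly G * indepSetPoly H := by
  simp only [indepSetPoly, Finset.sum_filter, Finset.sum_mul_sum]
  rw [← Finset.sumEquiv.symm.toEquiv.sum_comp, Fintype.sum_prod_type]
  simp only [OrderIso.coe_toEquiv, Finset.sumEquiv_symm_apply,
    isIndepSet_disjUnion_disjSum_iff, card_disjSum, pow_add, ite_zero_mul_ite_zero]

theorem indepSetPoly_top (α : Type*) [Fintype α] :
    indepSetPoly (⊤ : SimpleGraph α) = 1 + C (Fintype.card α) * X := by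
  have hindep : ∀ s : Finset α, IsIndepSet ⊤ s ↔ s = ∅ ∨ ∃ a, s = {a} := by
    intro s
    rw [← card_eq_zero, ← card_eq_one, ← Nat.le_one_iff_eq_zero_or_eq_one, card_le_one]
    simp [IsIndepSet]
  have hsets : univ.filter (IsIndepSet (⊤ : SimpleGraph α)) =
      insert ∅ (univ.map ⟨singleton, singleton_injective⟩) := by
    ext s
    simp [hindep, eq_comm]
  rw [indepSetPoly, hsets, sum_insert (by simp), sum_map]
  simp

noncomputable def finsetProdEquivPi : Finset (V × W) ≃ (V → Finset W) where
  toFun t v := univ.filter fun w => (v, w) ∈ t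
  invFun f := univ.filter fun x => x.2 ∈ f x.1
  left_inv t := by ext x; simp
  right_inv f := by ext v w; simp

@[simp]
theorem mem_finsetProdEquivPi_symm {f : V → Finset W} {x : V × W} :
    x ∈ finsetProdEquivPi.symm f ↔ x.2 ∈ f x.1 := by
  simp [finsetProdEquivPi]

theorem card_finsetProdEquivPi_symm (f : V → Finset W) :
    #(finsetProdEquivPi.symm f) = ∑ v, #(f v) := by
  rw [finsetProdEquivPi, Equiv.coe_fn_symm_mk, card_eq_sum_ones, sum_filter,
    Fintype.sum_prod_type]
  simp

theorem isIndepSet_corona_disjSum_iff {G : SimpleGraph V} {H : SimpleGraph W} {S : Finset V}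
    {f : V → Finset W} :
    IsIndepSet (corona G H) (S.disjSum (finsetProdEquivPi.symm f)) ↔
      IsIndepSet G S ∧ ∀ v, IsIndepSet H (f v) ∧ (v ∈ S → f v = ∅) := by
  refine ⟨fun h => ⟨fun u hu v hv huv => ?_,
    fun v => ⟨fun w hw w' hw' hww' => ?_, fun hv => ?_⟩⟩, ?_⟩
  · exact h (.inl u) (by simpa) (.inl v) (by simpa) (by simpa)
  · exact fun hadj => h (.inr (v, w)) (by simpa) (.inr (v, w')) (by simpa) (by simpa) ⟨rfl, hadj⟩
  · exact eq_empty_of_forall_notMem fun w hw =>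
      h (.inl v) (by simpa) (.inr (v, w)) (by simpa) (by simp) rfl
  · rintro ⟨hS, hf⟩ (u | ⟨u, w⟩) hx (v | ⟨v, w'⟩) hy hne hadj
    · exact hS u (by simpa using hx) v (by simpa using hy) (by simpa using hne) hadj
    · obtain rfl : u = v := hadj
      simp [(hf u).2 (by simpa using hx)] at hy
    · obtain rfl : v = u := hadj
      simp [(hf v).2 (by simpa using hy)] at hx
    · obtain ⟨rfl, hadj⟩ := hadj
      exact (hf u).1 w (by simpa using hx) w' (by simpa using hy) (by simpa using hne) hadj

theorem sum_pi_indepSetPoly (H : SimpleGraph W) (S : Finset V) :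
    ∑ f : V → Finset W,
        (if ∀ v, IsIndepSet H (f v) ∧ (v ∈ S → f v = ∅) then ∏ v, X ^ #(f v) else 0) =
      indepSetPoly H ^ (Fintype.card V - #S) := by
  calc _ = ∑ f : V → Finset W,
        ∏ v, (if IsIndepSet H (f v) ∧ (v ∈ S → f v = ∅) then X ^ #(f v) else 0) := by
        simp only [Fintype.prod_ite_zero]
    _ = ∏ v, ∑ U, (if IsIndepSet H U ∧ (v ∈ S → U = ∅) then X ^ #U else 0) :=
        (Fintype.prod_sum fun v U =>
          if IsIndepSet H U ∧ (v ∈ S → U = ∅) then (X : ℕ[X]) ^ #U else 0).symm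
    _ = ∏ v, if v ∈ S then 1 else indepSetPoly H := by
        refine Fintype.prod_congr _ _ fun v => ?_
        split_ifs with hv
        · rw [Fintype.sum_eq_single ∅ fun U hU => if_neg fun h => hU (h.2 hv)]
          simp [IsIndepSet]
        · simp [hv, indepSetPoly, sum_filter]
    _ = indepSetPoly H ^ (Fintype.card V - #S) := by
        simp [Finset.prod_ite, filter_not, ← compl_eq_univ_sdiff, card_compl]

theorem indepSetPoly_corona (G : SimpleGraph V) (H : SimpleGraph W) :
    indepSetPoly (corona G H) =
      ∑ S with IsIndepSet G S, indepSetPoly H ^ (Fintype.card V - #S) * X ^ #S := by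
  rw [indepSetPoly]
  simp only [sum_filter]
  rw [← Finset.sumEquiv.symm.toEquiv.sum_comp, Fintype.sum_prod_type]
  refine sum_congr rfl fun S _ => ?_
  rw [← finsetProdEquivPi.symm.sum_comp, ← sum_pi_indepSetPoly H S]
  simp only [OrderIso.coe_toEquiv, sumEquiv_symm_apply, isIndepSet_corona_disjSum_iff,
    card_disjSum, card_finsetProdEquivPi_symm, pow_add, ← prod_pow_eq_pow_sum, ite_and]
  split_ifs <;> simp [mul_sum, mul_comm]

end IndepSetPoly

theorem mul_two_mul_sub_le_succ_of_div_le {n ω i : ℕ} (hk : (2 * n * ω - 1 + ω) / (ω + 1) ≤ i) :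
    ω * (2 * n - i) ≤ i + 1 := by
  rw [Nat.div_le_iff_le_mul_add_pred (by omega)] at hk
  rw [Nat.mul_sub, show ω * (2 * n) = 2 * n * ω by ring]
  rw [add_mul, one_mul] at hk
  omega

theorem le_two_mul_mul_sub_one_add_div_succ {n ω : ℕ} (hω : 1 ≤ ω) :
    n ≤ (2 * n * ω - 1 + ω) / (ω + 1) := by
  rw [Nat.le_div_iff_mul_le (by omega)]
  have h1 : n ≤ n * ω := Nat.le_mul_of_pos_right n hω
  have h2 : 2 * n * ω = n * ω + n * ω := by ring
  rw [mul_add, mul_one]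
  omega

section CoronaTwoCliques

variable {V : Type*} [Fintype V] (G : SimpleGraph V) {p q : ℕ}

theorem indepCount_corona_eq_sum (i : ℕ) :
    indepCount (corona G (disjUnion (⊤ : SimpleGraph (Fin p)) (⊤ : SimpleGraph (Fin q)))) i =
      ∑ S with IsIndepSet G S,
        (((1 + C p * X) * (1 + C q * X)) ^ (Fintype.card V - #S) * X ^ #S).coeff i := by
  rw [← coeff_indepSetPoly, indepSetPoly_corona, indepSetPoly_disjUnion, indepSetPoly_top,
    indepSetPoly_top, finsetSum_coeff]
  simp only [Fintype.card_fin]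

theorem indepCount_corona_le_indepCount_succ (hp : 1 ≤ p) (hq : 1 ≤ q) {i : ℕ}
    (hi : i < Fintype.card V) :
    indepCount (corona G (disjUnion (⊤ : SimpleGraph (Fin p)) (⊤ : SimpleGraph (Fin q)))) i ≤
      indepCount (corona G (disjUnion (⊤ : SimpleGraph (Fin p)) (⊤ : SimpleGraph (Fin q))))
        (i + 1) := by
  rw [indepCount_corona_eq_sum, indepCount_corona_eq_sum]
  gcongr with S
  rw [coeff_mul_X_pow', coeff_mul_X_pow']
  split_ifs with hSi hSi'
  · rw [Nat.sub_add_comm hSi]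
    have := card_le_univ S
    exact coeff_one_add_mul_X_mul_one_add_mul_X_pow_le_coeff_succ hp hq (by omega)
  · omega
  · exact Nat.zero_le _
  · exact le_rfl

theorem indepCount_corona_succ_le_indepCount {ω : ℕ} (hω : 1 ≤ ω) (hpω : p ≤ ω) (hqω : q ≤ ω)
    {i : ℕ} (hi : ω * (2 * Fintype.card V - i) ≤ i + 1) :
    indepCount (corona G (disjUnion (⊤ : SimpleGraph (Fin p)) (⊤ : SimpleGraph (Fin q))))
        (i + 1) ≤
      indepCount (corona G (disjUnion (⊤ : SimpleGraph (Fin p)) (⊤ : SimpleGraph (Fin q)))) i := by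
  rw [indepCount_corona_eq_sum, indepCount_corona_eq_sum]
  gcongr with S
  have hSV := card_le_univ S
  have hVi : Fintype.card V ≤ i := by
    have := Nat.le_mul_of_pos_left (2 * Fintype.card V - i) hω
    omega
  obtain ⟨r, rfl⟩ : ∃ r, i = r + #S := ⟨i - #S, by omega⟩
  rw [add_right_comm, coeff_mul_X_pow, coeff_mul_X_pow]
  refine coeff_succ_one_add_mul_X_mul_one_add_mul_X_pow_le_coeff hpω hqω ?_
  rcases Nat.eq_zero_or_pos (2 * (Fintype.card V - #S) - r) with h0 | hpos
  · simp [h0]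
  · have hsplit : 2 * Fintype.card V - (r + #S) = (2 * (Fintype.card V - #S) - r) + #S := by omega
    rw [hsplit, mul_add] at hi
    have := Nat.le_mul_of_pos_left #S hω
    omega

end CoronaTwoCliques

theorem corona_perfect_coeff_monotonicity_general {V : Type*} [Fintype V] (G : SimpleGraph V)
    (n : ℕ) (hn : Fintype.card V = n) (p q : ℕ) (hp : 1 ≤ p) (hq : 1 ≤ q) :
    let Kpq := disjUnion (⊤ : SimpleGraph (Fin p)) (⊤ : SimpleGraph (Fin q))
    let s := indepCount (corona G Kpq)
    let ω := max (cliqueNum G) (max p q)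
    let k := (2 * n * ω - 1 + ω) / (ω + 1)
    (∀ i, k ≤ i → i < 2 * n → s (i + 1) ≤ s i) ∧
      (∀ i, i < 2 * n - k → s i ≤ s (i + 1)) := by
  intro Kpq s ω k
  have hpω : p ≤ ω := le_max_of_le_right (le_max_left p q)
  have hqω : q ≤ ω := le_max_of_le_right (le_max_right p q)
  have hω : 1 ≤ ω := hp.trans hpω
  subst hn
  refine ⟨fun i hki _ => ?_, fun i hi => ?_⟩
  · exact indepCount_corona_succ_le_indepCount G hω hpω hqω
      (mul_two_mul_sub_le_succ_of_div_le hki)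
  · have hnk : Fintype.card V ≤ k := le_two_mul_mul_sub_one_add_div_succ hω
    exact indepCount_corona_le_indepCount_succ G hp hq (by omega)

/-- for perfect `G` of order `n`, with `ω = max{ω(G), p, q}`, the coefficients
of `I(G∘(K_p ∪ K_q); x)` decrease from index `⌈(2nω-1)/(ω+1)⌉` up to `2n` and increase from
index `0` up to `t = 2n - ⌈(2nω-1)/(ω+1)⌉`. -/
theorem corona_perfect_coeff_monotonicity {V : Type*} [Fintype V] (G : SimpleGraph V)
    (n : ℕ) (hn : Fintype.card V = n) (hn1 : 1 ≤ n) (p q : ℕ) (hp : 1 ≤ p) (hq : 1 ≤ q)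
    (hG : IsPerfect G) :
    let Kpq := disjUnion (⊤ : SimpleGraph (Fin p)) (⊤ : SimpleGraph (Fin q))
    let s := indepCount (corona G Kpq)
    let ω := max (cliqueNum G) (max p q)
    let k := (2 * n * ω - 1 + ω) / (ω + 1)
    (∀ i, k ≤ i → i < 2 * n → s (i + 1) ≤ s i) ∧
      (∀ i, i < 2 * n - k → s i ≤ s (i + 1)) :=
  corona_perfect_coeff_monotonicity_general G n hn p q hp hq
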